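/- For all integers n ≥ 0 and k ≥ 0, the difference Δ²P_{n,k} := P(max(1, M_{n+2}) − S_{n+2} ≤ k) − P(max(1, M_n) − S_n ≤ k) satisfies Δ²P_{n,k} = p²·P(M_n = 0, S_n = −k) − q²·P(M_n ≤ 1, S_n = 1−k) − q²·P(M_n ≤ 2, S_n = 2−k). -/

import Mathlib

open Finset

/-- Probability weight of a single path of length `N`. -/
noncomputable def pathProb (p : ℝ) (N : ℕ) (x : Fin N → Bool) : ℝ :=
  p ^ (Finset.univ.filter (fun i => x i = true)).card *
    (1 - p) ^ (N - (Finset.univ.filter (fun i => x i = true)).card)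

open Classical in
/-- Probability of an event `E` for the `N`-step Bernoulli walk. -/
noncomputable def walkProb (p : ℝ) (N : ℕ) (E : Set (Fin N → Bool)) : ℝ :=
  ∑ x : Fin N → Bool, if x ∈ E then pathProb p N x else 0

/-- Partial sum `S_j` of the walk given by the path `x`. -/
def walkS (N : ℕ) (x : Fin N → Bool) (j : ℕ) : ℤ :=
  ∑ i ∈ Finset.univ.filter (fun i : Fin N => (i : ℕ) < j), (if x i then (1 : ℤ) else -1)

/-- Running maximum `M_N = max_{0 ≤ j ≤ N} S_j`. -/
def walkM (N : ℕ) (x : Fin N → Bool) : ℤ :=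
  (Finset.range (N + 1)).sup' Finset.nonempty_range_add_one (fun j => walkS N x j)

/-- `U_n(p) = P(M_n ≤ 1)`. -/
noncomputable def U (n : ℕ) (p : ℝ) : ℝ :=
  walkProb p n {x | walkM n x ≤ 1}

/-! Condition on the first two steps. If a path of length `n` has running maximum `M ≥ 0` and
endpoint `S`, prepending the steps `ε₁ ε₂` gives running maximum `max 0 (ε₁ + max 0 (ε₂ + M))` and
endpoint `ε₁ + ε₂ + S`, so `max 1 M' - S'` for the longer path is `M - S` after `++`,
`max 1 M - S` after `+-` and `-+`, and `max 3 M - S` after `--`. As `p² + 2pq + q² = 1`, the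
difference `Δ²P` is `p²` times `P(M - S ≤ k) - P(max 1 M - S ≤ k)` minus `q²` times
`P(max 1 M - S ≤ k) - P(max 3 M - S ≤ k)`, and these differences are the probabilities of the
events `{M = 0, S = -k}` and `{M ≤ 1, S = 1 - k} ⊔ {M ≤ 2, S = 2 - k}`. -/

lemma walkS_zero (N : ℕ) (x : Fin N → Bool) : walkS N x 0 = 0 := by
  simp [walkS]

lemma walkS_cons (n : ℕ) (b : Bool) (y : Fin n → Bool) (j : ℕ) :
    walkS (n + 1) (Fin.cons b y) (j + 1) = (if b then 1 else -1) + walkS n y j := by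
  simp [walkS, Finset.sum_filter, Fin.sum_univ_succ]

lemma walkM_nonneg (N : ℕ) (x : Fin N → Bool) : 0 ≤ walkM N x :=
  walkS_zero N x ▸ Finset.le_sup' (fun j => walkS N x j) (Finset.mem_range.mpr N.succ_pos)

lemma walkM_cons (n : ℕ) (b : Bool) (y : Fin n → Bool) :
    walkM (n + 1) (Fin.cons b y) = max 0 ((if b then 1 else -1) + walkM n y) := by
  simp only [walkM]
  rw [Finset.sup'_congr _ (Finset.range_add_one' (n + 1)) fun _ _ => rfl, Finset.sup'_insert,
    Finset.sup'_map, walkS_zero, Finset.add_sup']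
  · exact congrArg (max 0) (Finset.sup'_congr _ rfl fun j _ => walkS_cons n b y j)
  · exact Finset.nonempty_range_add_one.map

lemma pathProb_eq_prod (p : ℝ) (N : ℕ) (x : Fin N → Bool) :
    pathProb p N x = ∏ i, if x i then p else 1 - p := by
  rw [Finset.prod_ite, Finset.prod_const, Finset.prod_const, pathProb, Finset.filter_not,
    Finset.card_sdiff_of_subset (Finset.filter_subset _ _), Finset.card_univ, Fintype.card_fin]

lemma pathProb_cons (p : ℝ) (n : ℕ) (b : Bool) (y : Fin n → Bool) :
    pathProb p (n + 1) (Fin.cons b y) = (if b then p else 1 - p) * pathProb p n y := by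
  simp only [pathProb_eq_prod, Fin.prod_univ_succ, Fin.cons_zero, Fin.cons_succ]

lemma walkProb_eq_sum_indicator (p : ℝ) (N : ℕ) (E : Set (Fin N → Bool)) :
    walkProb p N E = ∑ x, E.indicator (pathProb p N) x :=
  rfl

lemma walkProb_union (p : ℝ) (N : ℕ) {E F : Set (Fin N → Bool)} (h : Disjoint E F) :
    walkProb p N (E ∪ F) = walkProb p N E + walkProb p N F := by
  simp only [walkProb_eq_sum_indicator, Set.indicator_union_of_disjoint h, Finset.sum_add_distrib]

lemma walkProb_succ (p : ℝ) (n : ℕ) (E : Set (Fin (n + 1) → Bool)) :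
    walkProb p (n + 1) E = p * walkProb p n {y | Fin.cons true y ∈ E} +
      (1 - p) * walkProb p n {y | Fin.cons false y ∈ E} := by
  have h_cons (b : Bool) (y : Fin n → Bool) : E.indicator (pathProb p (n + 1)) (Fin.cons b y) =
      (if b then p else 1 - p) * {y | Fin.cons b y ∈ E}.indicator (pathProb p n) y := by
    by_cases h : Fin.cons b y ∈ E <;> simp [h, pathProb_cons]
  simp only [walkProb_eq_sum_indicator, Finset.mul_sum]
  rw [← (Fin.consEquiv fun _ => Bool).sum_comp, Fintype.sum_prod_type, Fintype.sum_bool]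
  simp [Fin.consEquiv, h_cons]

lemma walkProb_add_two_max_one_sub_le (p : ℝ) (n : ℕ) (k : ℤ) :
    walkProb p (n + 2) {x | max 1 (walkM (n + 2) x) - walkS (n + 2) x (n + 2) ≤ k} =
      p * (p * walkProb p n {y | walkM n y - walkS n y n ≤ k} +
        (1 - p) * walkProb p n {y | max 1 (walkM n y) - walkS n y n ≤ k}) +
      (1 - p) * (p * walkProb p n {y | max 1 (walkM n y) - walkS n y n ≤ k} +
        (1 - p) * walkProb p n {y | max 3 (walkM n y) - walkS n y n ≤ k}) := by
  rw [walkProb_succ, walkProb_succ, walkProb_succ]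
  simp only [Set.mem_ofPred_eq, walkM_cons, walkS_cons, if_true, Bool.false_eq_true, if_false]
  congr! 4 <;> congr 1 <;> ext y <;>
    (have := walkM_nonneg n y; simp only [Set.mem_ofPred_eq]; omega)

lemma walkProb_walkM_sub_le (p : ℝ) (n : ℕ) (k : ℤ) :
    walkProb p n {y | walkM n y - walkS n y n ≤ k} =
      walkProb p n {y | max 1 (walkM n y) - walkS n y n ≤ k} +
      walkProb p n {y | walkM n y = 0 ∧ walkS n y n = -k} := by
  rw [← walkProb_union]
  · congr 1
    ext y
    have := walkM_nonneg n y
    simp only [Set.mem_union, Set.mem_ofPred_eq]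
    omega
  · rw [Set.disjoint_left]
    intro y h₁ h₂
    simp only [Set.mem_ofPred_eq] at h₁ h₂
    omega

lemma walkProb_max_one_sub_le (p : ℝ) (n : ℕ) (k : ℤ) :
    walkProb p n {y | max 1 (walkM n y) - walkS n y n ≤ k} =
      walkProb p n {y | max 3 (walkM n y) - walkS n y n ≤ k} +
      walkProb p n {y | walkM n y ≤ 1 ∧ walkS n y n = 1 - k} +
      walkProb p n {y | walkM n y ≤ 2 ∧ walkS n y n = 2 - k} := by
  rw [← walkProb_union, ← walkProb_union]
  · congr 1
    ext y
    simp only [Set.mem_union, Set.mem_ofPred_eq]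
    omega
  all_goals
    rw [Set.disjoint_left]
    intro y h₁ h₂
    simp only [Set.mem_union, Set.mem_ofPred_eq] at h₁ h₂
    omega

theorem deltaSqP_formula_general (p : ℝ) (n k : ℕ) :
    walkProb p (n + 2) {x | max 1 (walkM (n + 2) x) - walkS (n + 2) x (n + 2) ≤ (k : ℤ)} -
      walkProb p n {x | max 1 (walkM n x) - walkS n x n ≤ (k : ℤ)} =
    p ^ 2 * walkProb p n {x | walkM n x = 0 ∧ walkS n x n = -(k : ℤ)} -
      (1 - p) ^ 2 * walkProb p n {x | walkM n x ≤ 1 ∧ walkS n x n = 1 - (k : ℤ)} -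
      (1 - p) ^ 2 * walkProb p n {x | walkM n x ≤ 2 ∧ walkS n x n = 2 - (k : ℤ)} := by
  rw [walkProb_add_two_max_one_sub_le, walkProb_walkM_sub_le, walkProb_max_one_sub_le]
  ring

/-- `Δ²P_{n,k} = p²·P(M_n = 0, S_n = −k) − q²·P(M_n ≤ 1, S_n = 1−k) − q²·P(M_n ≤ 2, S_n = 2−k)`. -/
theorem deltaSqP_formula (p : ℝ) (hp : p ∈ Set.Ioo (0 : ℝ) 1) (n k : ℕ) :
    walkProb p (n + 2) {x | max 1 (walkM (n + 2) x) - walkS (n + 2) x (n + 2) ≤ (k : ℤ)} -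
      walkProb p n {x | max 1 (walkM n x) - walkS n x n ≤ (k : ℤ)} =
    p ^ 2 * walkProb p n {x | walkM n x = 0 ∧ walkS n x n = -(k : ℤ)} -
      (1 - p) ^ 2 * walkProb p n {x | walkM n x ≤ 1 ∧ walkS n x n = 1 - (k : ℤ)} -
      (1 - p) ^ 2 * walkProb p n {x | walkM n x ≤ 2 ∧ walkS n x n = 2 - (k : ℤ)} :=
  deltaSqP_formula_general p n k
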